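/- arXiv:2409.17505 — 5 statements merged into one kernel-verified Lean document; each statement's English description precedes it below -/
import Mathlib

section
/- Suppose E[‖ξ(X_1)‖_H] < ∞ and the Bochner expectation E[ξ(X_1)] = 0 in H, and let λ_t ∈ [0,1] be 𝔉_{t−1}-measurable for every t ≥ 1. Then the wealth process (K_t)_{t≥0} is a nonnegative martingale with respect to the filtration (𝔉_t) with E[K_t] = 1 for all t, and for every α ∈ (0,1), P(∃ t ≥ 1 : K_t ≥ 1/α) ≤ α. -/
open MeasureTheory ProbabilityTheory
open scoped ENNReal RealInnerProductSpace

/-!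
Each step multiplies the wealth by `Φ_t(ω, X_t ω)` with `Φ_t(ω, x) = 1 + λ_t(ω) g_t(ω, x)`,
where `Φ_t` is `𝔉_{t-1} ⊗ 𝒳`-measurable and nonnegative (`g_t ≥ -1` by the lower bound on `h`).
Since `X_t` is independent of `𝔉_{t-1}` with law `μ`, integrating out `X_t` first gives the factor
`∫ Φ_t(ω, ·) dμ = 1 + λ_t(ω) ⟪∑ ξ(X_i ω), 𝔼 ξ⟫ / ∑ M(X_i ω) = 1`. Doing this with lower
Lebesgue integrals needs no integrability of the product `K_{t-1} Φ_t`, so `K` is a nonnegative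
martingale of mean one. Ville's inequality is Doob's maximal inequality on `[0, n]`, `n → ∞`.
-/

section Independence

variable {Ω β γ : Type*} {m mΩ : MeasurableSpace Ω} {mβ : MeasurableSpace β}
  {mγ : MeasurableSpace γ} {P : Measure Ω} [IsFiniteMeasure P] {Y : Ω → β} {Z : Ω → γ}

theorem lintegral_comp_prodMk_of_indepFun (hY : Measurable Y) (hZ : Measurable Z)
    (hind : IndepFun Y Z P) {F : β × γ → ℝ≥0∞} (hF : Measurable F) :
    ∫⁻ ω, F (Y ω, Z ω) ∂P = ∫⁻ ω, ∫⁻ z, F (Y ω, z) ∂(P.map Z) ∂P := by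
  rw [← lintegral_map hF (hY.prodMk hZ),
    hind.map_prod_eq_prod_map_map hY.aemeasurable hZ.aemeasurable,
    lintegral_prod _ hF.aemeasurable, lintegral_map hF.lintegral_prod_right' hY]

theorem lintegral_mul_comp_eq_of_indep (hm : m ≤ mΩ) (hZ : Measurable Z)
    (hind : Indep m (mγ.comap Z) P) {f : Ω → ℝ≥0∞} (hf : Measurable[m] f)
    {Φ : Ω → γ → ℝ≥0∞} (hΦ : Measurable[m.prod mγ] (Function.uncurry Φ))
    (hΦ_one : ∀ ω, ∫⁻ z, Φ ω z ∂(P.map Z) = 1) :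
    ∫⁻ ω, f ω * Φ ω (Z ω) ∂P = ∫⁻ ω, f ω ∂P := by
  -- The sub-σ-algebra `m` enters as the law of the identity map `(Ω, mΩ) → (Ω, m)`.
  have hid : Measurable[mΩ, m] id := measurable_id'' hm
  have hind' : @IndepFun Ω Ω γ mΩ m mγ id Z P := by
    rw [IndepFun_iff_Indep (mβ := m), MeasurableSpace.comap_id]
    exact hind
  calc ∫⁻ ω, f ω * Φ ω (Z ω) ∂P = ∫⁻ ω, ∫⁻ z, f ω * Φ ω z ∂(P.map Z) ∂P :=
        lintegral_comp_prodMk_of_indepFun hid hZ hind' (F := fun p => f p.1 * Φ p.1 p.2)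
          ((hf.comp measurable_fst).mul hΦ)
    _ = ∫⁻ ω, f ω ∂P := lintegral_congr fun ω => by
        rw [lintegral_const_mul _ hΦ.of_uncurry_left, hΦ_one, mul_one]

end Independence

section MultiplicativeMartingale

variable {Ω γ : Type*} {mΩ : MeasurableSpace Ω} {mγ : MeasurableSpace γ} {P : Measure Ω}
  [IsFiniteMeasure P] {ℱ : Filtration ℕ mΩ} {K : ℕ → Ω → ℝ}

theorem martingale_of_nonneg_of_setLIntegral_succ (hadp : StronglyAdapted ℱ K)
    (hnn : ∀ n ω, 0 ≤ K n ω) (hint : Integrable (K 0) P)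
    (hstep : ∀ n A, MeasurableSet[ℱ n] A →
      ∫⁻ ω in A, ENNReal.ofReal (K (n + 1) ω) ∂P = ∫⁻ ω in A, ENNReal.ofReal (K n ω) ∂P) :
    Martingale K ℱ P := by
  have hmeas n : AEStronglyMeasurable (K n) P := ((hadp n).mono (ℱ.le n)).aestronglyMeasurable
  have hlint n : ∫⁻ ω, ENNReal.ofReal (K n ω) ∂P = ∫⁻ ω, ENNReal.ofReal (K 0 ω) ∂P := by
    induction n with
    | zero => rfl
    | succ n ih => simpa [ih] using hstep n Set.univ MeasurableSet.univ
  have hK_int n : Integrable (K n) P := by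
    have hnn' : 0 ≤ᵐ[P] K n := .of_forall (hnn n)
    refine ⟨hmeas n, (hasFiniteIntegral_iff_ofReal hnn').2 ?_⟩
    rw [hlint]
    exact (hasFiniteIntegral_iff_ofReal (.of_forall (hnn 0))).1 hint.2
  refine martingale_of_setIntegral_eq_succ hadp hK_int fun n A hA => ?_
  rw [integral_eq_lintegral_of_nonneg_ae (.of_forall (hnn n)) (hmeas n).restrict,
    integral_eq_lintegral_of_nonneg_ae (.of_forall (hnn (n + 1))) (hmeas (n + 1)).restrict,
    hstep n A hA]

theorem MeasureTheory.Martingale.ville_ineq (hK : Martingale K ℱ P) (hnn : ∀ n ω, 0 ≤ K n ω)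
    {c : ℝ} (hc : 0 < c) :
    P {ω | ∃ t, c ≤ K t ω} ≤ ENNReal.ofReal ((∫ ω, K 0 ω ∂P) / c) := by
  set E : ℕ → Set Ω := fun n =>
    {ω | (c.toNNReal : ℝ) ≤
      (Finset.range (n + 1)).sup' Finset.nonempty_range_add_one fun k => K k ω}
  have hE_mono : Monotone E := fun a b hab ω hω => le_trans hω
    (Finset.sup'_mono (fun k => K k ω) (Finset.range_subset_range.2 (by omega)) _)
  have hcover : {ω | ∃ t, c ≤ K t ω} ⊆ ⋃ n, E n := fun ω ⟨t, ht⟩ => Set.mem_iUnion.2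
    ⟨t, (Real.coe_toNNReal c hc.le).trans_le
      (ht.trans (Finset.le_sup' (fun k => K k ω) (Finset.self_mem_range_succ t)))⟩
  have hE n : P (E n) ≤ ENNReal.ofReal ((∫ ω, K 0 ω ∂P) / c) := by
    have hmax := maximal_ineq hK.submartingale (fun k ω => hnn k ω) (ε := c.toNNReal) n
    have hint : ∫ ω in E n, K n ω ∂P ≤ ∫ ω, K 0 ω ∂P := by
      calc ∫ ω in E n, K n ω ∂P ≤ ∫ ω, K n ω ∂P :=
            setIntegral_le_integral (hK.integrable n) (.of_forall (hnn n))
        _ = ∫ ω, K 0 ω ∂P := by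
          simpa using (hK.setIntegral_eq n.zero_le MeasurableSet.univ).symm
    rw [ENNReal.ofReal_div_of_pos hc, ENNReal.le_div_iff_mul_le (by simp [hc]) (by simp), mul_comm]
    exact hmax.trans (ENNReal.ofReal_le_ofReal hint)
  calc P {ω | ∃ t, c ≤ K t ω} ≤ P (⋃ n, E n) := measure_mono hcover
    _ = ⨆ n, P (E n) := hE_mono.measure_iUnion
    _ ≤ _ := iSup_le hE

variable {Z : ℕ → Ω → γ} {Φ : ℕ → Ω → γ → ℝ}

theorem nonneg_of_mul_succ (hK0 : ∀ ω, K 0 ω = 1)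
    (hrec : ∀ n ω, K (n + 1) ω = K n ω * Φ n ω (Z (n + 1) ω)) (hΦ : ∀ n ω z, 0 ≤ Φ n ω z) :
    ∀ n ω, 0 ≤ K n ω := by
  intro n ω
  induction n with
  | zero => simp [hK0]
  | succ n ih => rw [hrec]; exact mul_nonneg ih (hΦ _ _ _)

theorem stronglyAdapted_of_mul_succ (hK0 : ∀ ω, K 0 ω = 1)
    (hrec : ∀ n ω, K (n + 1) ω = K n ω * Φ n ω (Z (n + 1) ω))
    (hΦ : ∀ n, Measurable[(ℱ n).prod mγ] (Function.uncurry (Φ n)))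
    (hZ : ∀ n, Measurable[ℱ (n + 1)] (Z (n + 1))) : StronglyAdapted ℱ K := by
  intro n
  induction n with
  | zero => rw [show K 0 = fun _ => 1 from funext hK0]; exact stronglyMeasurable_const
  | succ n ih =>
    have hfactor : Measurable[ℱ (n + 1)] fun ω => Φ n ω (Z (n + 1) ω) :=
      (hΦ n).comp ((measurable_id'' (ℱ.mono n.le_succ)).prodMk (hZ n))
    rw [funext (hrec n)]
    exact (ih.mono (ℱ.mono n.le_succ)).mul hfactor.stronglyMeasurable

theorem setLIntegral_ofReal_mul_succ (hK0 : ∀ ω, K 0 ω = 1)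
    (hrec : ∀ n ω, K (n + 1) ω = K n ω * Φ n ω (Z (n + 1) ω)) (hΦ_nonneg : ∀ n ω z, 0 ≤ Φ n ω z)
    (hΦ : ∀ n, Measurable[(ℱ n).prod mγ] (Function.uncurry (Φ n)))
    (hZ : ∀ n, Measurable[ℱ (n + 1)] (Z (n + 1)))
    (hind : ∀ n, Indep (ℱ n) (mγ.comap (Z (n + 1))) P)
    (hΦ_one : ∀ n ω, ∫⁻ z, ENNReal.ofReal (Φ n ω z) ∂(P.map (Z (n + 1))) = 1)
    (n : ℕ) {A : Set Ω} (hA : MeasurableSet[ℱ n] A) :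
    ∫⁻ ω in A, ENNReal.ofReal (K (n + 1) ω) ∂P = ∫⁻ ω in A, ENNReal.ofReal (K n ω) ∂P := by
  have hnn := nonneg_of_mul_succ hK0 hrec hΦ_nonneg
  have hKn : Measurable[ℱ n] (K n) := (stronglyAdapted_of_mul_succ hK0 hrec hΦ hZ n).measurable
  rw [← lintegral_indicator (ℱ.le n A hA), ← lintegral_indicator (ℱ.le n A hA)]
  calc ∫⁻ ω, A.indicator (fun ω => ENNReal.ofReal (K (n + 1) ω)) ω ∂P
      = ∫⁻ ω, A.indicator (fun ω => ENNReal.ofReal (K n ω)) ω *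
          ENNReal.ofReal (Φ n ω (Z (n + 1) ω)) ∂P := lintegral_congr fun ω => by
        by_cases hω : ω ∈ A <;> simp [hω, hrec, ENNReal.ofReal_mul (hnn n ω)]
    _ = ∫⁻ ω, A.indicator (fun ω => ENNReal.ofReal (K n ω)) ω ∂P :=
        lintegral_mul_comp_eq_of_indep (ℱ.le n) ((hZ n).mono (ℱ.le _) le_rfl) (hind n)
          ((ENNReal.measurable_ofReal.comp hKn).indicator hA)
          (Φ := fun ω z => ENNReal.ofReal (Φ n ω z)) (ENNReal.measurable_ofReal.comp (hΦ n))
          (hΦ_one n)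

theorem martingale_of_mul_succ (hK0 : ∀ ω, K 0 ω = 1)
    (hrec : ∀ n ω, K (n + 1) ω = K n ω * Φ n ω (Z (n + 1) ω)) (hΦ_nonneg : ∀ n ω z, 0 ≤ Φ n ω z)
    (hΦ : ∀ n, Measurable[(ℱ n).prod mγ] (Function.uncurry (Φ n)))
    (hZ : ∀ n, Measurable[ℱ (n + 1)] (Z (n + 1)))
    (hind : ∀ n, Indep (ℱ n) (mγ.comap (Z (n + 1))) P)
    (hΦ_one : ∀ n ω, ∫⁻ z, ENNReal.ofReal (Φ n ω z) ∂(P.map (Z (n + 1))) = 1) :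
    Martingale K ℱ P :=
  martingale_of_nonneg_of_setLIntegral_succ (stronglyAdapted_of_mul_succ hK0 hrec hΦ hZ)
    (nonneg_of_mul_succ hK0 hrec hΦ_nonneg) (by simp [funext hK0])
    fun n _ hA => setLIntegral_ofReal_mul_succ hK0 hrec hΦ_nonneg hΦ hZ hind hΦ_one n hA

end MultiplicativeMartingale

theorem neg_one_le_sum_div_sum {ι : Type*} (s : Finset ι) {a b : ι → ℝ} (hb : ∀ i ∈ s, 0 < b i)
    (hab : ∀ i ∈ s, -b i ≤ a i) : -1 ≤ (∑ i ∈ s, a i) / ∑ i ∈ s, b i := by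
  rcases s.eq_empty_or_nonempty with rfl | hs
  · simp
  rw [le_div_iff₀ (Finset.sum_pos hb hs), neg_one_mul, ← Finset.sum_neg_distrib]
  exact Finset.sum_le_sum hab

theorem lintegral_ofReal_one_add_eq_one {α : Type*} {mα : MeasurableSpace α} {μ : Measure α}
    [IsProbabilityMeasure μ] {f : α → ℝ} (hf : Integrable f μ) (hf_mean : ∫ x, f x ∂μ = 0)
    (hf_ge : ∀ x, -1 ≤ f x) : ∫⁻ x, ENNReal.ofReal (1 + f x) ∂μ = 1 := by
  have hint : Integrable (fun x => 1 + f x) μ := (integrable_const 1).add hf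
  have hnn : 0 ≤ᵐ[μ] fun x => 1 + f x := .of_forall fun x => by
    simp only [Pi.zero_apply]; linarith [hf_ge x]
  rw [← ofReal_integral_eq_lintegral_ofReal hint hnn, integral_add (integrable_const 1) hf, hf_mean]
  simp

section Wealth

variable {Ω 𝒳 : Type*} {mΩ : MeasurableSpace Ω} {m𝒳 : MeasurableSpace 𝒳} {P : Measure Ω}
  {X : ℕ → Ω → 𝒳} {ℱ : Filtration ℕ mΩ}

theorem measurable_of_mem_Icc (hℱ : ∀ t, ℱ t = ⨆ i ∈ Finset.Icc 1 t, m𝒳.comap (X i))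
    {i t : ℕ} (hi : i ∈ Finset.Icc 1 t) : Measurable[ℱ t] (X i) :=
  Measurable.of_comap_le (hℱ t ▸ le_iSup₂ (f := fun i _ => m𝒳.comap (X i)) i hi)

theorem indep_filtration_comap_succ (hXmeas : ∀ i, Measurable (X i)) (hXindep : iIndepFun X P)
    (hℱ : ∀ t, ℱ t = ⨆ i ∈ Finset.Icc 1 t, m𝒳.comap (X i)) (n : ℕ) :
    Indep (ℱ n) (m𝒳.comap (X (n + 1))) P := by
  have := indep_iSup_of_disjoint (fun i => (hXmeas i).comap_le)
    ((iIndepFun_iff_iIndep _ X P).1 hXindep) (S := Finset.Icc 1 n) (T := {n + 1}) (by simp)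
  simpa [hℱ n] using this

variable {H : Type*} [NormedAddCommGroup H] [InnerProductSpace ℝ H] {ξ : 𝒳 → H} {M : 𝒳 → ℝ}
  {g : ℕ → Ω → 𝒳 → ℝ}

theorem measurable_payoff (hℱ : ∀ t, ℱ t = ⨆ i ∈ Finset.Icc 1 t, m𝒳.comap (X i))
    (hξ : StronglyMeasurable ξ) (hMmeas : Measurable M)
    (hg : ∀ t ω x, g t ω x =
      (∑ i ∈ Finset.Icc 1 (t - 1), ⟪ξ (X i ω), ξ x⟫) / (∑ i ∈ Finset.Icc 1 (t - 1), M (X i ω)))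
    (t : ℕ) : Measurable[(ℱ (t - 1)).prod m𝒳] (Function.uncurry (g t)) := by
  have hX i (hi : i ∈ Finset.Icc 1 (t - 1)) : Measurable[(ℱ (t - 1)).prod m𝒳] fun p => X i p.1 :=
    (measurable_of_mem_Icc hℱ hi).comp measurable_fst
  simp_rw [Function.uncurry_def, hg]
  refine Measurable.div ?_ ?_
  · refine Finset.measurable_sum _ fun i hi => ?_
    exact ((hξ.comp_measurable (hX i hi)).inner (hξ.comp_measurable measurable_snd)).measurable
  · exact Finset.measurable_sum _ fun i hi => hMmeas.comp (hX i hi)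

theorem integrable_payoff {μ : Measure 𝒳} (hξ_int : Integrable ξ μ)
    (hg : ∀ t ω x, g t ω x =
      (∑ i ∈ Finset.Icc 1 (t - 1), ⟪ξ (X i ω), ξ x⟫) / (∑ i ∈ Finset.Icc 1 (t - 1), M (X i ω)))
    (t : ℕ) (ω : Ω) : Integrable (g t ω) μ := by
  simp_rw [funext (hg t ω), ← sum_inner]
  exact (hξ_int.const_inner _).div_const _

theorem integral_payoff_eq_zero [CompleteSpace H] {μ : Measure 𝒳} (hξ_int : Integrable ξ μ)
    (hξ_mean : ∫ x, ξ x ∂μ = 0)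
    (hg : ∀ t ω x, g t ω x =
      (∑ i ∈ Finset.Icc 1 (t - 1), ⟪ξ (X i ω), ξ x⟫) / (∑ i ∈ Finset.Icc 1 (t - 1), M (X i ω)))
    (t : ℕ) (ω : Ω) : ∫ x, g t ω x ∂μ = 0 := by
  simp_rw [hg, ← sum_inner]
  rw [integral_div, integral_inner hξ_int, hξ_mean, inner_zero_right, zero_div]

theorem neg_one_le_mul_payoff (hMpos : ∀ x, 0 < M x) (hMbound : ∀ x y, -(M x) ≤ ⟪ξ x, ξ y⟫)
    (hg : ∀ t ω x, g t ω x =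
      (∑ i ∈ Finset.Icc 1 (t - 1), ⟪ξ (X i ω), ξ x⟫) / (∑ i ∈ Finset.Icc 1 (t - 1), M (X i ω)))
    {l : ℝ} (hl : l ∈ Set.Icc 0 1) (t : ℕ) (ω : Ω) (x : 𝒳) : -1 ≤ l * g t ω x := by
  have hg_ge : -1 ≤ g t ω x := by
    rw [hg]
    exact neg_one_le_sum_div_sum _ (fun i _ => hMpos _) fun i _ => hMbound _ _
  nlinarith [hl.1, hl.2]

theorem lintegral_ofReal_one_add_mul_payoff [CompleteSpace H] {μ : Measure 𝒳}
    [IsProbabilityMeasure μ] (hMpos : ∀ x, 0 < M x) (hMbound : ∀ x y, -(M x) ≤ ⟪ξ x, ξ y⟫)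
    (hξ_int : Integrable ξ μ) (hξ_mean : ∫ x, ξ x ∂μ = 0)
    (hg : ∀ t ω x, g t ω x =
      (∑ i ∈ Finset.Icc 1 (t - 1), ⟪ξ (X i ω), ξ x⟫) / (∑ i ∈ Finset.Icc 1 (t - 1), M (X i ω)))
    {l : ℝ} (hl : l ∈ Set.Icc 0 1) (t : ℕ) (ω : Ω) :
    ∫⁻ x, ENNReal.ofReal (1 + l * g t ω x) ∂μ = 1 := by
  refine lintegral_ofReal_one_add_eq_one ((integrable_payoff hξ_int hg t ω).const_mul l) ?_
    (neg_one_le_mul_payoff hMpos hMbound hg hl t ω)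
  rw [integral_const_mul, integral_payoff_eq_zero hξ_int hξ_mean hg, mul_zero]

end Wealth

theorem wealth_is_test_martingale_and_ville_general
    {Ω : Type*} {mΩ : MeasurableSpace Ω} {P : Measure Ω} [IsProbabilityMeasure P]
    {𝒳 : Type*} {m𝒳 : MeasurableSpace 𝒳}
    (X : ℕ → Ω → 𝒳) (hXmeas : ∀ i, Measurable (X i))
    (hXindep : iIndepFun (m := fun _ => m𝒳) X P)
    (hXident : ∀ i, Measure.map (X i) P = Measure.map (X 1) P)
    (ℱ : Filtration ℕ mΩ)
    (hℱ : ∀ t, ℱ t = ⨆ i ∈ Finset.Icc 1 t, MeasurableSpace.comap (X i) m𝒳)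
    {H : Type*} [NormedAddCommGroup H] [InnerProductSpace ℝ H] [CompleteSpace H]
    (ξ : 𝒳 → H) (hξ : StronglyMeasurable ξ)
    (M : 𝒳 → ℝ) (hMmeas : Measurable M) (hMpos : ∀ x, 0 < M x)
    (hMbound : ∀ x y, -(M x) ≤ ⟪ξ x, ξ y⟫)
    (g : ℕ → Ω → 𝒳 → ℝ)
    (hg : ∀ t ω x, g t ω x =
      (∑ i ∈ Finset.Icc 1 (t - 1), ⟪ξ (X i ω), ξ x⟫) /
        (∑ i ∈ Finset.Icc 1 (t - 1), M (X i ω)))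
    (lam : ℕ → Ω → ℝ)
    (hlam_pred : ∀ t : ℕ, 1 ≤ t → Measurable[ℱ (t - 1)] (lam t))
    (hlam_mem : ∀ t ω, lam t ω ∈ Set.Icc (0 : ℝ) 1)
    (K : ℕ → Ω → ℝ)
    (hK0 : ∀ ω, K 0 ω = 1)
    (hKrec : ∀ t : ℕ, 1 ≤ t → ∀ ω, K t ω = K (t - 1) ω * (1 + lam t ω * g t ω (X t ω)))
    (hnorm_int : Integrable (fun ω => ‖ξ (X 1 ω)‖) P)
    (hmean : ∫ ω, ξ (X 1 ω) ∂P = 0) :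
    Martingale K ℱ P ∧ (∀ t ω, 0 ≤ K t ω) ∧ (∀ t, ∫ ω, K t ω ∂P = 1) ∧
      ∀ α ∈ Set.Ioo (0 : ℝ) 1, P {ω | ∃ t ≥ 1, 1 / α ≤ K t ω} ≤ ENNReal.ofReal α := by
  set μ := P.map (X 1)
  have hμ : IsProbabilityMeasure μ := Measure.isProbabilityMeasure_map (hXmeas 1).aemeasurable
  have hξ_int : Integrable ξ μ :=
    (integrable_map_measure hξ.aestronglyMeasurable (hXmeas 1).aemeasurable).2
      ((integrable_norm_iff (hξ.comp_measurable (hXmeas 1)).aestronglyMeasurable).1 hnorm_int)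
  have hξ_mean : ∫ x, ξ x ∂μ = 0 := by
    rwa [integral_map (hXmeas 1).aemeasurable hξ.aestronglyMeasurable]
  have hrec : ∀ n ω, K (n + 1) ω = K n ω * (1 + lam (n + 1) ω * g (n + 1) ω (X (n + 1) ω)) :=
    fun n => hKrec (n + 1) n.succ_pos
  have hΦ_nonneg n ω x : 0 ≤ 1 + lam (n + 1) ω * g (n + 1) ω x := by
    linarith [neg_one_le_mul_payoff hMpos hMbound hg (hlam_mem (n + 1) ω) (n + 1) ω x]
  have hmart : Martingale K ℱ P := martingale_of_mul_succ (Z := X) hK0 hrec hΦ_nonneg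
    (fun n => measurable_const.add (((hlam_pred (n + 1) n.succ_pos).comp measurable_fst).mul
      (measurable_payoff hℱ hξ hMmeas hg (n + 1))))
    (fun n => measurable_of_mem_Icc hℱ (by simp))
    (indep_filtration_comap_succ hXmeas hXindep hℱ)
    (fun n ω => hXident (n + 1) ▸ lintegral_ofReal_one_add_mul_payoff hMpos hMbound hξ_int
      hξ_mean hg (hlam_mem (n + 1) ω) (n + 1) ω)
  have hnn := nonneg_of_mul_succ (Z := X) hK0 hrec hΦ_nonneg
  have hmean t : ∫ ω, K t ω ∂P = 1 := by
    simpa [hK0] using (hmart.setIntegral_eq t.zero_le MeasurableSet.univ).symm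
  refine ⟨hmart, hnn, hmean, fun α hα => ?_⟩
  calc P {ω | ∃ t ≥ 1, 1 / α ≤ K t ω} ≤ P {ω | ∃ t, 1 / α ≤ K t ω} :=
        measure_mono fun ω ⟨t, _, ht⟩ => ⟨t, ht⟩
    _ ≤ ENNReal.ofReal ((∫ ω, K 0 ω ∂P) / (1 / α)) := hmart.ville_ineq hnn (by simp [hα.1])
    _ = ENNReal.ofReal α := by rw [hmean, one_div_one_div]

/-- Let `(X_t)_{t ≥ 1}` be i.i.d. `𝒳`-valued random variables with natural filtration
`𝔉_t = σ(X_1, …, X_t)`, `H` a separable real Hilbert space, `ξ : 𝒳 → H` strongly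
measurable, and `h(x, y) = ⟪ξ x, ξ y⟫`. Let `M : 𝒳 → (0, ∞)` be measurable with
`h(x, y) ≥ -M(x)` for all `x, y`. Define payoffs `g_t(x)` as the ratio
`(∑_{i=1}^{t-1} h(X_i, x)) / (∑_{i=1}^{t-1} M(X_i))` (so `g_1 = 0` by the junk-value
convention `0/0 = 0`), let `λ_t ∈ [0,1]` be `𝔉_{t-1}`-measurable, and let the wealth be
`K_0 = 1`, `K_t = K_{t-1} (1 + λ_t g_t(X_t))`. If `E ‖ξ(X₁)‖ < ∞` and the Bochner
expectation `E[ξ(X₁)] = 0`, then `K` is a nonnegative martingale with `E[K_t] = 1` for all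
`t`, and for every `α ∈ (0,1)`, `P(∃ t ≥ 1, K_t ≥ 1/α) ≤ α`. -/
theorem wealth_is_test_martingale_and_ville
    {Ω : Type*} {mΩ : MeasurableSpace Ω} {P : Measure Ω} [IsProbabilityMeasure P]
    {𝒳 : Type*} {m𝒳 : MeasurableSpace 𝒳}
    (X : ℕ → Ω → 𝒳) (hXmeas : ∀ i, Measurable (X i))
    (hXindep : iIndepFun (m := fun _ => m𝒳) X P)
    (hXident : ∀ i, Measure.map (X i) P = Measure.map (X 1) P)
    (ℱ : Filtration ℕ mΩ)
    (hℱ : ∀ t, ℱ t = ⨆ i ∈ Finset.Icc 1 t, MeasurableSpace.comap (X i) m𝒳)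
    {H : Type*} [NormedAddCommGroup H] [InnerProductSpace ℝ H] [CompleteSpace H]
    [SecondCountableTopology H]
    (ξ : 𝒳 → H) (hξ : StronglyMeasurable ξ)
    (M : 𝒳 → ℝ) (hMmeas : Measurable M) (hMpos : ∀ x, 0 < M x)
    (hMbound : ∀ x y, -(M x) ≤ ⟪ξ x, ξ y⟫)
    (g : ℕ → Ω → 𝒳 → ℝ)
    (hg : ∀ t ω x, g t ω x =
      (∑ i ∈ Finset.Icc 1 (t - 1), ⟪ξ (X i ω), ξ x⟫) /
        (∑ i ∈ Finset.Icc 1 (t - 1), M (X i ω)))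
    (lam : ℕ → Ω → ℝ)
    (hlam_pred : ∀ t : ℕ, 1 ≤ t → Measurable[ℱ (t - 1)] (lam t))
    (hlam_mem : ∀ t ω, lam t ω ∈ Set.Icc (0 : ℝ) 1)
    (K : ℕ → Ω → ℝ)
    (hK0 : ∀ ω, K 0 ω = 1)
    (hKrec : ∀ t : ℕ, 1 ≤ t → ∀ ω, K t ω = K (t - 1) ω * (1 + lam t ω * g t ω (X t ω)))
    (hnorm_int : Integrable (fun ω => ‖ξ (X 1 ω)‖) P)
    (hmean : ∫ ω, ξ (X 1 ω) ∂P = 0) :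
    Martingale K ℱ P ∧ (∀ t ω, 0 ≤ K t ω) ∧ (∀ t, ∫ ω, K t ω ∂P = 1) ∧
      ∀ α ∈ Set.Ioo (0 : ℝ) 1, P {ω | ∃ t ≥ 1, 1 / α ≤ K t ω} ≤ ENNReal.ofReal α :=
  wealth_is_test_martingale_and_ville_general X hXmeas hXindep hXident ℱ hℱ ξ hξ M hMmeas hMpos
    hMbound g hg lam hlam_pred hlam_mem K hK0 hKrec hnorm_int hmean
end

section
/- Suppose E[‖ξ(X_1)‖_H] < ∞ and E[M(X_1)] < ∞, and define g*(x) = E[h(X_1, x)] / E[M(X_1)]. Then almost surely (1/t) Σ_{i=1}^{t} |g_i(X_i) − g*(X_i)| → 0 as t → ∞, and almost surely (1/t) Σ_{i=1}^{t} g_i(X_i) → E[g*(X_1)] as t → ∞. -/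
open MeasureTheory ProbabilityTheory Filter Finset Asymptotics
open scoped RealInnerProductSpace Topology

/-!
Writing `S_n = ∑_{i ≤ n} ξ(X_i)` and `T_n = ∑_{i ≤ n} M(X_i)`, the payoff is
`g_{t+1}(x) = ⟪T_t⁻¹ • S_t, ξ x⟫` and `g*(x) = ⟪w, ξ x⟫` with `w = E[M(X₁)]⁻¹ • E[ξ(X₁)]`.
By the Banach-valued strong law, `T_t⁻¹ • S_t → w` almost surely, so
`|g_{t+1}(X_{t+1}) - g*(X_{t+1})| ≤ r_t ‖ξ(X_{t+1})‖` with `r_t → 0`. A null sequence times a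
nonnegative sequence with convergent Cesàro means (the strong law for `‖ξ(X_i)‖`) has Cesàro
means tending to `0`. The second claim then follows from the strong law for `g*(X_i)`.
-/

theorem Finset.sum_Icc_one_eq_sum_range {M : Type*} [AddCommMonoid M] (f : ℕ → M) (n : ℕ) :
    ∑ i ∈ Icc 1 n, f i = ∑ i ∈ range n, f (i + 1) := by
  rw [range_eq_Ico, sum_Ico_add', Ico_add_one_right_eq_Icc, zero_add]

theorem tendsto_inv_mul_sum_mul_of_tendsto_zero {r a : ℕ → ℝ} {L : ℝ} (ha : ∀ i, 0 ≤ a i)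
    (hr : Tendsto r atTop (𝓝 0))
    (haL : Tendsto (fun n : ℕ => (n : ℝ)⁻¹ * ∑ i ∈ range n, a i) atTop (𝓝 L)) :
    Tendsto (fun n : ℕ => (n : ℝ)⁻¹ * ∑ i ∈ range n, r i * a i) atTop (𝓝 0) := by
  -- Comparing with `a i + 1` rather than `a i` keeps the partial sums of the comparison
  -- sequence divergent, as `IsLittleO.sum_range` requires.
  have ha1 : ∀ i, 0 ≤ a i + 1 := fun i => by linarith [ha i]
  have hra : (fun i => r i * a i) =o[atTop] fun i => a i + 1 := by
    have h := ((isLittleO_one_iff ℝ).2 hr).mul_isBigO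
      (isBigO_of_le (l := atTop) (f := a) (g := fun i => a i + 1) fun i => by
        rw [Real.norm_of_nonneg (ha i), Real.norm_of_nonneg (ha1 i)]
        linarith)
    simpa only [one_mul] using h
  have hsum_a : (fun n : ℕ => ∑ i ∈ range n, a i) =O[atTop] fun n : ℕ => (n : ℝ) := by
    refine ((haL.isBigO_one ℝ).mul (isBigO_refl (fun n : ℕ => (n : ℝ)) atTop)).congr' ?_ ?_
    · filter_upwards [eventually_ne_atTop 0] with n hn
      field_simp
    · simp
  have hsum_a1 : ∀ n, ∑ i ∈ range n, (a i + 1) = ∑ i ∈ range n, a i + n := by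
    simp [sum_add_distrib]
  have hsum : (fun n : ℕ => ∑ i ∈ range n, (a i + 1)) =O[atTop] fun n : ℕ => (n : ℝ) := by
    simpa only [hsum_a1] using hsum_a.add (isBigO_refl _ _)
  have htop : Tendsto (fun n => ∑ i ∈ range n, (a i + 1)) atTop atTop := by
    refine tendsto_atTop_mono (fun n => ?_) tendsto_natCast_atTop_atTop
    rw [hsum_a1, le_add_iff_nonneg_left]
    exact sum_nonneg fun i _ => ha i
  simpa only [div_eq_inv_mul] using
    ((hra.sum_range ha1 htop).trans_isBigO hsum).tendsto_div_nhds_zero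

theorem tendsto_inv_mul_sum_of_tendsto_inv_mul_sum_abs_sub {a b : ℕ → ℝ} {L : ℝ}
    (hab : Tendsto (fun n : ℕ => (n : ℝ)⁻¹ * ∑ i ∈ range n, |a i - b i|) atTop (𝓝 0))
    (hb : Tendsto (fun n : ℕ => (n : ℝ)⁻¹ * ∑ i ∈ range n, b i) atTop (𝓝 L)) :
    Tendsto (fun n : ℕ => (n : ℝ)⁻¹ * ∑ i ∈ range n, a i) atTop (𝓝 L) := by
  have hdiff : Tendsto (fun n : ℕ => (n : ℝ)⁻¹ * ∑ i ∈ range n, (a i - b i)) atTop (𝓝 0) := by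
    refine squeeze_zero_norm (fun n => ?_) hab
    rw [norm_mul, norm_inv, RCLike.norm_natCast]
    exact mul_le_mul_of_nonneg_left (abs_sum_le_sum_abs _ _) (by positivity)
  simpa [sum_sub_distrib, mul_sub] using hb.add hdiff

theorem tendsto_inv_sum_smul_sum {E : Type*} [NormedAddCommGroup E] [NormedSpace ℝ E]
    {v : ℕ → E} {c : ℕ → ℝ} {μ : E} {m : ℝ} (hm : m ≠ 0)
    (hv : Tendsto (fun n : ℕ => (n : ℝ)⁻¹ • ∑ i ∈ range n, v i) atTop (𝓝 μ))
    (hc : Tendsto (fun n : ℕ => (n : ℝ)⁻¹ * ∑ i ∈ range n, c i) atTop (𝓝 m)) :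
    Tendsto (fun n => (∑ i ∈ range n, c i)⁻¹ • ∑ i ∈ range n, v i) atTop (𝓝 (m⁻¹ • μ)) := by
  refine ((hc.inv₀ hm).smul hv).congr' ?_
  filter_upwards [eventually_ne_atTop 0] with n hn
  rw [smul_smul, mul_inv, inv_inv, mul_comm (n : ℝ), mul_assoc,
    mul_inv_cancel₀ (Nat.cast_ne_zero.2 hn), mul_one]

theorem tendsto_inv_mul_sum_abs_inner_sub {H : Type*} [NormedAddCommGroup H]
    [InnerProductSpace ℝ H] {v : ℕ → H} {c : ℕ → ℝ} {μ : H} {m L : ℝ} (hm : m ≠ 0)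
    (hv : Tendsto (fun n : ℕ => (n : ℝ)⁻¹ • ∑ i ∈ range n, v i) atTop (𝓝 μ))
    (hc : Tendsto (fun n : ℕ => (n : ℝ)⁻¹ * ∑ i ∈ range n, c i) atTop (𝓝 m))
    (hnorm : Tendsto (fun n : ℕ => (n : ℝ)⁻¹ * ∑ i ∈ range n, ‖v i‖) atTop (𝓝 L)) :
    Tendsto (fun n : ℕ => (n : ℝ)⁻¹ * ∑ i ∈ range n,
      |⟪(∑ j ∈ range i, c j)⁻¹ • ∑ j ∈ range i, v j - m⁻¹ • μ, v i⟫|) atTop (𝓝 0) := by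
  have hr := tendsto_iff_norm_sub_tendsto_zero.1 (tendsto_inv_sum_smul_sum hm hv hc)
  refine squeeze_zero (fun n => by positivity) (fun n => ?_)
    (tendsto_inv_mul_sum_mul_of_tendsto_zero (fun i => norm_nonneg (v i)) hr hnorm)
  gcongr with i
  exact abs_real_inner_le_norm _ _

theorem ae_tendsto_inv_smul_sum_comp_of_iid {Ω 𝒳 E : Type*} {mΩ : MeasurableSpace Ω}
    {P : Measure Ω} {m𝒳 : MeasurableSpace 𝒳} [NormedAddCommGroup E] [NormedSpace ℝ E]
    [CompleteSpace E] [MeasurableSpace E] [BorelSpace E]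
    {X : ℕ → Ω → 𝒳} (hXmeas : ∀ i, Measurable (X i)) (hXindep : iIndepFun X P)
    (hXident : ∀ i, P.map (X i) = P.map (X 1)) {f : 𝒳 → E} (hf : Measurable f)
    (hint : Integrable (fun ω => f (X 1 ω)) P) :
    ∀ᵐ ω ∂P, Tendsto (fun n : ℕ => (n : ℝ)⁻¹ • ∑ i ∈ range n, f (X (i + 1) ω)) atTop
      (𝓝 (∫ ω, f (X 1 ω) ∂P)) :=
  strong_law_ae (fun i ω => f (X (i + 1) ω)) hint
    (fun i j hij => (hXindep.indepFun (by omega)).comp hf hf)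
    (fun i => (IdentDistrib.mk (hXmeas _).aemeasurable (hXmeas _).aemeasurable
      ((hXident (i + 1)).trans (hXident 1).symm)).comp hf)

theorem payoff_first_order_slln_general
    {Ω : Type*} {mΩ : MeasurableSpace Ω} {P : Measure Ω} [IsProbabilityMeasure P]
    {𝒳 : Type*} {m𝒳 : MeasurableSpace 𝒳}
    (X : ℕ → Ω → 𝒳) (hXmeas : ∀ i, Measurable (X i))
    (hXindep : iIndepFun (m := fun _ => m𝒳) X P)
    (hXident : ∀ i, Measure.map (X i) P = Measure.map (X 1) P)
    {H : Type*} [NormedAddCommGroup H] [InnerProductSpace ℝ H] [CompleteSpace H]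
    (ξ : 𝒳 → H) (hξ : StronglyMeasurable ξ)
    (M : 𝒳 → ℝ) (hMmeas : Measurable M) (hMpos : ∀ x, 0 < M x)
    (g : ℕ → Ω → 𝒳 → ℝ)
    (hg : ∀ t ω x, g t ω x =
      (∑ i ∈ Finset.Icc 1 (t - 1), ⟪ξ (X i ω), ξ x⟫) /
        (∑ i ∈ Finset.Icc 1 (t - 1), M (X i ω)))
    (hnorm_int : Integrable (fun ω => ‖ξ (X 1 ω)‖) P)
    (hM_int : Integrable (fun ω => M (X 1 ω)) P)
    (gstar : 𝒳 → ℝ)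
    (hgstar : ∀ x, gstar x = (∫ ω, ⟪ξ (X 1 ω), ξ x⟫ ∂P) / ∫ ω, M (X 1 ω) ∂P) :
    ∀ᵐ ω ∂P,
      Tendsto (fun t : ℕ =>
          (1 / (t : ℝ)) * ∑ i ∈ Finset.Icc 1 t, |g i ω (X i ω) - gstar (X i ω)|)
        atTop (𝓝 0) ∧
      Tendsto (fun t : ℕ => (1 / (t : ℝ)) * ∑ i ∈ Finset.Icc 1 t, g i ω (X i ω))
        atTop (𝓝 (∫ ω', gstar (X 1 ω') ∂P)) := by
  borelize H
  have hξm : Measurable ξ := hξ.measurable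
  have hξ_int : Integrable (fun ω => ξ (X 1 ω)) P :=
    (integrable_norm_iff (hξ.comp_measurable (hXmeas 1)).aestronglyMeasurable).1 hnorm_int
  set m := ∫ ω, M (X 1 ω) ∂P
  set μ := ∫ ω, ξ (X 1 ω) ∂P
  have hm : m ≠ 0 := by
    refine ((integral_pos_iff_support_of_nonneg (fun ω => (hMpos (X 1 ω)).le) hM_int).2 ?_).ne'
    simp [Function.support, (hMpos _).ne']
  have hgstar_eq : gstar = fun x => ⟪m⁻¹ • μ, ξ x⟫ := funext fun x => by
    simp_rw [hgstar, real_inner_smul_left, real_inner_comm (ξ x), integral_inner hξ_int,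
      div_eq_inv_mul, μ]
  subst hgstar_eq
  have hg_eq : ∀ t ω x, g (t + 1) ω x =
      ⟪(∑ j ∈ range t, M (X (j + 1) ω))⁻¹ • ∑ j ∈ range t, ξ (X (j + 1) ω), ξ x⟫ := fun t ω x => by
    rw [hg, add_tsub_cancel_right, sum_Icc_one_eq_sum_range, sum_Icc_one_eq_sum_range,
      real_inner_smul_left, sum_inner, div_eq_inv_mul]
  have hgstar_meas : Measurable fun x => ⟪m⁻¹ • μ, ξ x⟫ :=
    (continuous_const.inner (𝕜 := ℝ) continuous_id).measurable.comp hξm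
  filter_upwards [ae_tendsto_inv_smul_sum_comp_of_iid hXmeas hXindep hXident hξm hξ_int,
    ae_tendsto_inv_smul_sum_comp_of_iid hXmeas hXindep hXident hMmeas hM_int,
    ae_tendsto_inv_smul_sum_comp_of_iid hXmeas hXindep hXident hξm.norm hnorm_int,
    ae_tendsto_inv_smul_sum_comp_of_iid hXmeas hXindep hXident hgstar_meas
      (hξ_int.const_inner (m⁻¹ • μ))] with ω hξω hMω hnormω hgstarω
  simp only [smul_eq_mul] at hMω hnormω hgstarω
  have herr := tendsto_inv_mul_sum_abs_inner_sub hm hξω hMω hnormω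
  simp only [one_div, sum_Icc_one_eq_sum_range, hg_eq, ← inner_sub_left]
  exact ⟨herr, tendsto_inv_mul_sum_of_tendsto_inv_mul_sum_abs_sub
    (by simpa only [inner_sub_left] using herr) hgstarω⟩

/-- Let `(X_t)_{t ≥ 1}` be i.i.d. `𝒳`-valued random variables, `H` a separable real Hilbert
space, `ξ : 𝒳 → H` strongly measurable, and `h(x, y) = ⟪ξ x, ξ y⟫`. Let `M : 𝒳 → (0, ∞)`
be measurable with `h(x, y) ≥ -M(x)` for all `x, y`, and define payoffs
`g_t(x) = (∑_{i=1}^{t-1} h(X_i, x)) / (∑_{i=1}^{t-1} M(X_i))` (so `g_1 = 0`). If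
`E ‖ξ(X₁)‖ < ∞` and `E M(X₁) < ∞`, then, with `g*(x) = E[h(X₁, x)] / E[M(X₁)]`, almost
surely `(1/t) ∑_{i=1}^t |g_i(X_i) - g*(X_i)| → 0` and
`(1/t) ∑_{i=1}^t g_i(X_i) → E[g*(X₁)]`. -/
theorem payoff_first_order_slln
    {Ω : Type*} {mΩ : MeasurableSpace Ω} {P : Measure Ω} [IsProbabilityMeasure P]
    {𝒳 : Type*} {m𝒳 : MeasurableSpace 𝒳}
    (X : ℕ → Ω → 𝒳) (hXmeas : ∀ i, Measurable (X i))
    (hXindep : iIndepFun (m := fun _ => m𝒳) X P)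
    (hXident : ∀ i, Measure.map (X i) P = Measure.map (X 1) P)
    {H : Type*} [NormedAddCommGroup H] [InnerProductSpace ℝ H] [CompleteSpace H]
    [SecondCountableTopology H]
    (ξ : 𝒳 → H) (hξ : StronglyMeasurable ξ)
    (M : 𝒳 → ℝ) (hMmeas : Measurable M) (hMpos : ∀ x, 0 < M x)
    (hMbound : ∀ x y, -(M x) ≤ ⟪ξ x, ξ y⟫)
    (g : ℕ → Ω → 𝒳 → ℝ)
    (hg : ∀ t ω x, g t ω x =
      (∑ i ∈ Finset.Icc 1 (t - 1), ⟪ξ (X i ω), ξ x⟫) /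
        (∑ i ∈ Finset.Icc 1 (t - 1), M (X i ω)))
    (hnorm_int : Integrable (fun ω => ‖ξ (X 1 ω)‖) P)
    (hM_int : Integrable (fun ω => M (X 1 ω)) P)
    (gstar : 𝒳 → ℝ)
    (hgstar : ∀ x, gstar x = (∫ ω, ⟪ξ (X 1 ω), ξ x⟫ ∂P) / ∫ ω, M (X 1 ω) ∂P) :
    ∀ᵐ ω ∂P,
      Tendsto (fun t : ℕ =>
          (1 / (t : ℝ)) * ∑ i ∈ Finset.Icc 1 t, |g i ω (X i ω) - gstar (X i ω)|)
        atTop (𝓝 0) ∧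
      Tendsto (fun t : ℕ => (1 / (t : ℝ)) * ∑ i ∈ Finset.Icc 1 t, g i ω (X i ω))
        atTop (𝓝 (∫ ω', gstar (X 1 ω') ∂P)) :=
  payoff_first_order_slln_general (mΩ := mΩ) X hXmeas hXindep hXident ξ hξ M hMmeas hMpos g hg
    hnorm_int hM_int gstar hgstar
end

section
/- For every real y ≥ −1 and every λ ∈ [0, 1), it holds that log(1 + λy) ≥ λy + y²·(log(1 − λ) + λ). -/
/-!
Write `φ_c(t) = log (1 + t c) - t c`, so that the claim reads `y² φ_{-1}(λ) ≤ φ_y(λ)`.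
Both sides vanish at `t = 0`, and `φ_c'(t) = -t c² / (1 + t c)`; since `0 < 1 - t ≤ 1 + t y`
on `[0, 1)`, the derivative `-t y² / (1 - t)` of the left side never exceeds that of the right.
-/

open Real Set

lemma one_add_mul_pos_of_neg_one_le {t c : ℝ} (hc : -1 ≤ c) (ht0 : 0 ≤ t) (ht1 : t < 1) :
    0 < 1 + t * c := by
  nlinarith

lemma hasDerivAt_log_one_add_mul_sub_mul {t c : ℝ} (h : 1 + t * c ≠ 0) :
    HasDerivAt (fun s => log (1 + s * c) - s * c) (-(t * c ^ 2 / (1 + t * c))) t := by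
  have hlin : HasDerivAt (fun s => 1 + s * c) c t := by
    simpa using ((hasDerivAt_id t).mul_const c).const_add 1
  refine ((hlin.log h).sub ((hasDerivAt_id' t).mul_const c)).congr_deriv ?_
  rw [neg_div', one_mul, div_sub' h]
  ring

lemma mul_sq_div_one_add_mul_le {t y : ℝ} (hy : -1 ≤ y) (ht0 : 0 ≤ t) (ht1 : t < 1) :
    t * y ^ 2 / (1 + t * y) ≤ t * y ^ 2 / (1 - t) :=
  div_le_div_of_nonneg_left (by positivity) (by linarith) (by nlinarith)

/-- For every real `y ≥ -1` and every `λ ∈ [0,1)`,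
`log (1 + λ y) ≥ λ y + y² (log (1 - λ) + λ)`. -/
theorem log_one_add_mul_lower_bound (y l : ℝ) (hy : -1 ≤ y) (hl0 : 0 ≤ l) (hl1 : l < 1) :
    l * y + y ^ 2 * (Real.log (1 - l) + l) ≤ Real.log (1 + l * y) := by
  have hderiv : ∀ c, -1 ≤ c → ∀ t ∈ Icc 0 l,
      HasDerivAt (fun s => log (1 + s * c) - s * c) (-(t * c ^ 2 / (1 + t * c))) t :=
    fun c hc t ht => hasDerivAt_log_one_add_mul_sub_mul
      (one_add_mul_pos_of_neg_one_le hc ht.1 (ht.2.trans_lt hl1)).ne'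
  have hcomp := image_le_of_deriv_right_le_deriv_boundary
    (f := fun s => y ^ 2 * (log (1 + s * -1) - s * -1))
    (B := fun s => log (1 + s * y) - s * y)
    (fun t ht => ((hderiv (-1) le_rfl t ht).const_mul _).continuousAt.continuousWithinAt)
    (fun t ht => ((hderiv (-1) le_rfl t (Ico_subset_Icc_self ht)).const_mul _).hasDerivWithinAt)
    (by simp)
    (fun t ht => (hderiv y hy t ht).continuousAt.continuousWithinAt)
    (fun t ht => (hderiv y hy t (Ico_subset_Icc_self ht)).hasDerivWithinAt)
    (fun t ht => by
      simp only [mul_neg, mul_one, neg_sq, one_pow, ← sub_eq_add_neg]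
      rw [mul_div_assoc', mul_comm (y ^ 2)]
      exact neg_le_neg (mul_sq_div_one_add_mul_le hy ht.1 (ht.2.trans hl1)))
    (right_mem_Icc.2 hl0)
  simp only [mul_neg, mul_one, sub_neg_eq_add, ← sub_eq_add_neg] at hcomp
  linarith
end

section
/- Fix θ ∈ ℝ and define s : ℝ → ℝ by s(x) = θ − x (the score of the Gaussian N(θ,1)), and define h : ℝ × ℝ → ℝ by h(x, x̃) = s(x)·s(x̃)·(1 + (x − x̃)²)^{−1/2} + (1 + (x − x̃)²)^{−3/2}·(s(x̃) − s(x))·(x − x̃) + (−3(1 + (x − x̃)²)^{−5/2}·(x − x̃)² + (1 + (x − x̃)²)^{−3/2}). Then for all x, x̃ ∈ ℝ, h(x, x̃) ≥ −(|x̃ − θ|·(1 + |x̃ − θ|) + 3). -/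
/-- For the Gaussian `N(θ,1)` score `s(x) = θ - x`, the Langevin Stein kernel with IMQ base
kernel (dimension `d = 1`) satisfies `h(x, y) ≥ -(|y - θ| (1 + |y - θ|) + 3)` for all `x, y`,
where `y` plays the role of `x̃`. -/
theorem gaussian_stein_kernel_lower_bound (θ : ℝ)
    (s : ℝ → ℝ) (hs : ∀ x, s x = θ - x)
    (h : ℝ → ℝ → ℝ)
    (hh : ∀ x y, h x y =
      s x * s y * (1 + (x - y) ^ 2) ^ (-(1 / 2) : ℝ)
        + (1 + (x - y) ^ 2) ^ (-(3 / 2) : ℝ) * (s y - s x) * (x - y)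
        + (-3 * (1 + (x - y) ^ 2) ^ (-(5 / 2) : ℝ) * (x - y) ^ 2
            + (1 + (x - y) ^ 2) ^ (-(3 / 2) : ℝ))) :
    ∀ x y, -(|y - θ| * (1 + |y - θ|) + 3) ≤ h x y := by
  intro x y
  rw [hh, hs, hs]
  set t : ℝ := 1 + (x - y) ^ 2 with ht_def
  have ht : (0:ℝ) < t := by positivity
  have ht1 : (1:ℝ) ≤ t := by nlinarith [sq_nonneg (x - y)]
  have hk1 : (0:ℝ) ≤ t ^ (-(1/2) : ℝ) := Real.rpow_nonneg ht.le _
  have hk3 : (0:ℝ) ≤ t ^ (-(3/2) : ℝ) := Real.rpow_nonneg ht.le _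
  have hk5 : (0:ℝ) ≤ t ^ (-(5/2) : ℝ) := Real.rpow_nonneg ht.le _
  have hk1le : t ^ (-(1/2) : ℝ) ≤ 1 :=
    Real.rpow_le_one_of_one_le_of_nonpos ht1 (by norm_num)
  have hk3le : t ^ (-(3/2) : ℝ) ≤ 1 :=
    Real.rpow_le_one_of_one_le_of_nonpos ht1 (by norm_num)
  have hk1sq : t ^ (-(1/2) : ℝ) * t ^ (-(1/2) : ℝ) = t⁻¹ := by
    rw [← Real.rpow_add ht]
    norm_num [Real.rpow_neg_one]
  have hk5t : t ^ (-(5/2) : ℝ) * t = t ^ (-(3/2) : ℝ) := by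
    have : t ^ (-(5/2) : ℝ) * t ^ (1 : ℝ) = t ^ (-(3/2) : ℝ) := by
      rw [← Real.rpow_add ht]; norm_num
    rwa [Real.rpow_one] at this
  -- |x - y| * k1 ≤ 1
  have husq : (x - y) ^ 2 * t⁻¹ ≤ 1 := by
    rw [← div_eq_mul_inv, div_le_one ht]
    nlinarith [sq_nonneg (x - y)]
  have hm2 : (|x - y| * t ^ (-(1/2) : ℝ)) ^ 2 = (x - y) ^ 2 * t⁻¹ := by
    rw [mul_pow, sq_abs, sq (t ^ (-(1/2) : ℝ)), hk1sq]
  have hm : |x - y| * t ^ (-(1/2) : ℝ) ≤ 1 := by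
    nlinarith [mul_nonneg (abs_nonneg (x - y)) hk1]
  have hB : |θ - y| = |y - θ| := abs_sub_comm _ _
  -- term 1 bound
  have e2 : (x - y) * t ^ (-(1/2) : ℝ) * (θ - y) ≤ |x - y| * t ^ (-(1/2) : ℝ) * |θ - y| := by
    calc (x - y) * t ^ (-(1/2) : ℝ) * (θ - y) ≤ |(x - y) * t ^ (-(1/2) : ℝ) * (θ - y)| :=
          le_abs_self _
      _ = |x - y| * t ^ (-(1/2) : ℝ) * |θ - y| := by
          rw [abs_mul, abs_mul, abs_of_nonneg hk1]
  have t1 : -|y - θ| ≤ (θ - x) * (θ - y) * t ^ (-(1/2) : ℝ) := by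
    have e1 : (θ - x) * (θ - y) * t ^ (-(1/2) : ℝ)
        = (θ - y) ^ 2 * t ^ (-(1/2) : ℝ) - (x - y) * t ^ (-(1/2) : ℝ) * (θ - y) := by ring
    have hsq : 0 ≤ (θ - y) ^ 2 * t ^ (-(1/2) : ℝ) := by positivity
    have hxyB : |x - y| * t ^ (-(1/2) : ℝ) * |θ - y| ≤ |y - θ| := by
      rw [hB]
      calc |x - y| * t ^ (-(1/2) : ℝ) * |y - θ| ≤ 1 * |y - θ| :=
            mul_le_mul_of_nonneg_right hm (abs_nonneg _)
        _ = |y - θ| := one_mul _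
    linarith [e2]
  -- term 2 bound
  have t2 : 0 ≤ t ^ (-(3/2) : ℝ) * (θ - y - (θ - x)) * (x - y) := by
    have : t ^ (-(3/2) : ℝ) * (θ - y - (θ - x)) * (x - y)
        = t ^ (-(3/2) : ℝ) * (x - y) ^ 2 := by ring
    rw [this]; positivity
  -- term 3 bound
  have t3 : (-2 : ℝ) ≤ -3 * t ^ (-(5/2) : ℝ) * (x - y) ^ 2 + t ^ (-(3/2) : ℝ) := by
    have h5 : t ^ (-(5/2) : ℝ) * (x - y) ^ 2 ≤ t ^ (-(3/2) : ℝ) := by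
      calc t ^ (-(5/2) : ℝ) * (x - y) ^ 2 ≤ t ^ (-(5/2) : ℝ) * t := by
            apply mul_le_mul_of_nonneg_left _ hk5
            nlinarith [sq_nonneg (x - y)]
        _ = t ^ (-(3/2) : ℝ) := hk5t
    linarith
  have hfinal : -(|y - θ| * (1 + |y - θ|) + 3) ≤ -|y - θ| + 0 + -2 := by
    nlinarith [mul_self_nonneg |y - θ|, abs_nonneg (y - θ)]
  linarith [t1, t2, t3]
end

section
/- Fix θ = (θ₁, θ₂) ∈ ℝ² and define s_θ : ℝ³ → ℝ³ by s_θ(x) = (θ₁(1 − tanh² x₁), θ₂(1 − tanh² x₂), 0) − x, and define h_θ : ℝ³ × ℝ³ → ℝ by h_θ(x, x̃) = ⟨s_θ(x), s_θ(x̃)⟩·(1 + ‖x − x̃‖²)^{−1/2} + (1 + ‖x − x̃‖²)^{−3/2}·⟨s_θ(x̃) − s_θ(x), x − x̃⟩ + (−3(1 + ‖x − x̃‖²)^{−5/2}·‖x − x̃‖² + 3(1 + ‖x − x̃‖²)^{−3/2}). Then for all x, x̃ ∈ ℝ³, h_θ(x, x̃) ≥ −((‖θ‖ + ‖s_θ(x̃)‖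 + 1)·‖s_θ(x̃)‖ + ‖θ‖ + 1), where ‖θ‖ denotes the Euclidean norm of (θ₁, θ₂). -/
/-!
Write `s x = s y - (x - y) + D`, where `D` is the difference of the bounded parts
`θᵢ (1 - tanh² xᵢ)` of the two scores, so `‖D‖ ≤ ‖θ‖`. With `r = ‖x - y‖` and
`w = (1 + r²)^(-1/2)` one has `r w ≤ 1` and `w ≤ 1`, so Cauchy–Schwarz gives
`⟨s x, s y⟩ w ≥ -(‖θ‖ + r) ‖s y‖ w ≥ -‖θ‖ ‖s y‖ - ‖s y‖` and
`w³ ⟨s y - s x, x - y⟩ = w³ (r² - ⟨D, x - y⟩) ≥ -‖θ‖`, while the last term of the kernel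
equals `w⁵ (d + (d - 3) r²) ≥ 0`.
-/

open scoped RealInnerProductSpace

/-- The score function of the intractable model
`p_θ(x) ∝ exp(θ₁ tanh x₁ + θ₂ tanh x₂ - ‖x‖²/2)` on `ℝ³`:
`s_θ(x) = (θ₁ (1 - tanh² x₁), θ₂ (1 - tanh² x₂), 0) - x`. -/
noncomputable def intractableScore (θ₁ θ₂ : ℝ) (x : EuclideanSpace ℝ (Fin 3)) :
    EuclideanSpace ℝ (Fin 3) :=
  WithLp.toLp 2 fun i =>
    (if i = 0 then θ₁ * (1 - Real.tanh (x 0) ^ 2)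
     else if i = 1 then θ₂ * (1 - Real.tanh (x 1) ^ 2) else 0) - x i

open Real

section SteinKernel

variable {E : Type*} [NormedAddCommGroup E] [InnerProductSpace ℝ E]

noncomputable def imqSteinKernel (d : ℝ) (s : E → E) (x y : E) : ℝ :=
  ⟪s x, s y⟫ * (1 + ‖x - y‖ ^ 2) ^ (-(1 / 2) : ℝ)
    + (1 + ‖x - y‖ ^ 2) ^ (-(3 / 2) : ℝ) * ⟪s y - s x, x - y⟫
    + (-3 * (1 + ‖x - y‖ ^ 2) ^ (-(5 / 2) : ℝ) * ‖x - y‖ ^ 2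
        + d * (1 + ‖x - y‖ ^ 2) ^ (-(3 / 2) : ℝ))

lemma neg_mul_norm_le_inner_of_norm_add_sub_le {a b v : E} {T : ℝ} (h : ‖a + v - b‖ ≤ T) :
    -((T + ‖v‖) * ‖b‖) ≤ ⟪a, b⟫ := by
  have hsplit : ⟪a, b⟫ = ⟪a + v - b, b⟫ - ⟪v, b⟫ + ‖b‖ ^ 2 := by
    rw [inner_sub_left, inner_add_left, real_inner_self_eq_norm_sq]
    ring
  rw [hsplit]
  nlinarith [neg_le_of_abs_le (abs_real_inner_le_norm (a + v - b) b), real_inner_le_norm v b,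
    mul_le_mul_of_nonneg_right h (norm_nonneg b)]

lemma norm_sq_sub_mul_norm_le_inner_of_norm_add_sub_le {a b v : E} {T : ℝ}
    (h : ‖a + v - b‖ ≤ T) : ‖v‖ ^ 2 - T * ‖v‖ ≤ ⟪b - a, v⟫ := by
  have hsplit : ⟪b - a, v⟫ = ‖v‖ ^ 2 - ⟪a + v - b, v⟫ := by
    rw [← real_inner_self_eq_norm_sq, inner_sub_left, inner_sub_left, inner_add_left]
    ring
  rw [hsplit]
  nlinarith [real_inner_le_norm (a + v - b) v, mul_le_mul_of_nonneg_right h (norm_nonneg v)]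

lemma one_add_sq_rpow_neg_half_sq_mul (r : ℝ) :
    ((1 + r ^ 2) ^ (-(1 / 2) : ℝ)) ^ 2 * (1 + r ^ 2) = 1 := by
  rw [← rpow_mul_natCast (by positivity)]
  norm_num [rpow_neg_one, inv_mul_cancel₀ (by positivity : (1 + r ^ 2) ≠ 0)]

lemma neg_le_imqSteinKernel {s : E → E} {d T : ℝ} (hd : 3 ≤ d) {x y : E}
    (hT : ‖s x + (x - y) - s y‖ ≤ T) :
    -(T * ‖s y‖ + ‖s y‖ + T) ≤ imqSteinKernel d s x y := by
  set r := ‖x - y‖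
  set w := (1 + r ^ 2) ^ (-(1 / 2) : ℝ) with hw_def
  have hu : 0 ≤ 1 + r ^ 2 := by positivity
  have hw3 : (1 + r ^ 2) ^ (-(3 / 2) : ℝ) = w ^ 3 := by
    rw [hw_def, ← rpow_mul_natCast hu]
    norm_num
  have hw5 : (1 + r ^ 2) ^ (-(5 / 2) : ℝ) = w ^ 5 := by
    rw [hw_def, ← rpow_mul_natCast hu]
    norm_num
  have hw0 : 0 < w := by positivity
  have hw : w ^ 2 * (1 + r ^ 2) = 1 := one_add_sq_rpow_neg_half_sq_mul r
  have hT0 : 0 ≤ T := (norm_nonneg _).trans hT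
  have hb : 0 ≤ ‖s y‖ := norm_nonneg _
  have hw1 : w ≤ 1 := by nlinarith
  have hrw : r * w ≤ 1 := by nlinarith
  have hI1 := neg_mul_norm_le_inner_of_norm_add_sub_le hT
  have hI2 := norm_sq_sub_mul_norm_le_inner_of_norm_add_sub_le hT
  have score_term : -(T * ‖s y‖) - ‖s y‖ ≤ ⟪s x, s y⟫ * w := by
    nlinarith [mul_le_mul_of_nonneg_right hI1 hw0.le, mul_le_mul_of_nonneg_left hw1 hb,
      mul_le_mul_of_nonneg_left hrw hb, mul_nonneg hT0 hb]
  have cross_term : -T ≤ w ^ 3 * ⟪s y - s x, x - y⟫ := by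
    have hw3_pos : 0 < w ^ 3 := by positivity
    nlinarith [mul_le_mul_of_nonneg_left hI2 hw3_pos.le, mul_le_mul_of_nonneg_left hrw hT0,
      mul_nonneg hw3_pos.le (sq_nonneg r)]
  have trace_term : 0 ≤ -3 * w ^ 5 * r ^ 2 + d * w ^ 3 := by
    have : -3 * w ^ 5 * r ^ 2 + d * w ^ 3 = w ^ 5 * (d + (d - 3) * r ^ 2) := by
      linear_combination (-d * w ^ 3) * hw
    rw [this]
    positivity
  unfold imqSteinKernel
  rw [hw3, hw5]
  linarith

end SteinKernel

lemma abs_tanh_sq_sub_tanh_sq_le_one (a b : ℝ) : |tanh a ^ 2 - tanh b ^ 2| ≤ 1 :=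
  abs_sub_le_of_nonneg_of_le (sq_nonneg _) (tanh_sq_lt_one a).le (sq_nonneg _)
    (tanh_sq_lt_one b).le

lemma norm_intractableScore_add_sub_le (θ₁ θ₂ : ℝ) (x y : EuclideanSpace ℝ (Fin 3)) :
    ‖intractableScore θ₁ θ₂ x + (x - y) - intractableScore θ₁ θ₂ y‖ ≤ √(θ₁ ^ 2 + θ₂ ^ 2) := by
  have coord (θ a b : ℝ) : (θ * (1 - tanh a ^ 2) - θ * (1 - tanh b ^ 2)) ^ 2 ≤ θ ^ 2 := by
    rw [show θ * (1 - tanh a ^ 2) - θ * (1 - tanh b ^ 2) = θ * (tanh b ^ 2 - tanh a ^ 2) by ring,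
      mul_pow, ← sq_abs (tanh b ^ 2 - tanh a ^ 2)]
    exact mul_le_of_le_one_right (sq_nonneg θ)
      (pow_le_one₀ (abs_nonneg _) (abs_tanh_sq_sub_tanh_sq_le_one b a))
  rw [EuclideanSpace.norm_eq, Fin.sum_univ_three]
  refine sqrt_le_sqrt ?_
  simp only [Fin.isValue, intractableScore, PiLp.sub_apply, PiLp.add_apply, ↓reduceIte,
    sub_add_sub_cancel, sub_sub_sub_cancel_right, norm_eq_abs, sq_abs, one_ne_zero, Fin.reduceEq,
    zero_sub, sub_neg_eq_add]
  linarith [coord θ₁ (x 0) (y 0), coord θ₂ (x 1) (y 1)]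

/-- For the intractable model on `ℝ³` with score `s_θ`, the Langevin Stein kernel with IMQ
base kernel (dimension `d = 3`) satisfies
`h_θ(x, y) ≥ -((‖θ‖ + ‖s_θ(y)‖ + 1) ‖s_θ(y)‖ + ‖θ‖ + 1)` for all `x, y`, where `y` plays
the role of `x̃` and `‖θ‖ = √(θ₁² + θ₂²)`. -/
theorem intractable_stein_kernel_lower_bound (θ₁ θ₂ : ℝ)
    (s : EuclideanSpace ℝ (Fin 3) → EuclideanSpace ℝ (Fin 3))
    (hs : ∀ x, s x = intractableScore θ₁ θ₂ x)
    (h : EuclideanSpace ℝ (Fin 3) → EuclideanSpace ℝ (Fin 3) → ℝ)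
    (hh : ∀ x y, h x y =
      ⟪s x, s y⟫ * (1 + ‖x - y‖ ^ 2) ^ (-(1 / 2) : ℝ)
        + (1 + ‖x - y‖ ^ 2) ^ (-(3 / 2) : ℝ) * ⟪s y - s x, x - y⟫
        + (-3 * (1 + ‖x - y‖ ^ 2) ^ (-(5 / 2) : ℝ) * ‖x - y‖ ^ 2
            + 3 * (1 + ‖x - y‖ ^ 2) ^ (-(3 / 2) : ℝ))) :
    ∀ x y,
      -((Real.sqrt (θ₁ ^ 2 + θ₂ ^ 2) + ‖s y‖ + 1) * ‖s y‖
          + Real.sqrt (θ₁ ^ 2 + θ₂ ^ 2) + 1) ≤ h x y := by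
  intro x y
  have hD : ‖s x + (x - y) - s y‖ ≤ √(θ₁ ^ 2 + θ₂ ^ 2) := by
    rw [hs x, hs y]
    exact norm_intractableScore_add_sub_le θ₁ θ₂ x y
  rw [show h x y = imqSteinKernel 3 s x y from hh x y]
  linarith [neg_le_imqSteinKernel le_rfl hD, sq_nonneg ‖s y‖]
end
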